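/- arXiv:1106.0472 — 2 statements merged into one kernel-verified Lean document; each statement's English description precedes it below -/
import Mathlib

section
/- Let (e_n) be a normalised unconditional basis with the shift property (every normalised block sequence is equivalent to its shift). Then the shift property holds uniformly: there is a constant C such that for all normalised block sequences (x_n), (x_n) is C-equivalent to (x_{n+1}). -/
open Filter Topology

noncomputable section

structure SchauderBasis' (X : Type*) [NormedAddCommGroup X] [NormedSpace ℝ X] where
  e : ℕ → X
  coord : ℕ → X →L[ℝ] ℝ
  biorth : ∀ n m, coord n (e m) = if n = m then 1 else 0
  expansion : ∀ x : X,
    Filter.Tendsto (fun N => ∑ n ∈ Finset.range N, coord n x • e n) Filter.atTop (nhds x)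
  normalised : ∀ n, ‖e n‖ = 1

section Defs

variable {X Y : Type*} [NormedAddCommGroup X] [NormedSpace ℝ X]
  [NormedAddCommGroup Y] [NormedSpace ℝ Y]

/-- Convergence of the series `∑ x n` (of partial sums). -/
def Converges (x : ℕ → X) : Prop :=
  ∃ s, Filter.Tendsto (fun N => ∑ n ∈ Finset.range N, x n) Filter.atTop (nhds s)

/-- Two sequences are equivalent if the same scalar series converge. -/
def SeqEquiv (x : ℕ → X) (y : ℕ → Y) : Prop :=
  ∀ a : ℕ → ℝ, Converges (fun n => a n • x n) ↔ Converges (fun n => a n • y n)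

/-- `C`-equivalence of two sequences. -/
def CEquiv (C : ℝ) (x : ℕ → X) (y : ℕ → Y) : Prop :=
  ∀ (a : ℕ → ℝ) (N : ℕ),
    C⁻¹ * ‖∑ n ∈ Finset.range N, a n • y n‖ ≤ ‖∑ n ∈ Finset.range N, a n • x n‖ ∧
    ‖∑ n ∈ Finset.range N, a n • x n‖ ≤ C * ‖∑ n ∈ Finset.range N, a n • y n‖

/-- A basic sequence: uniformly bounded partial-sum projections. -/
def IsBasicSeq (x : ℕ → X) : Prop :=
  ∃ K, 1 ≤ K ∧ ∀ (a : ℕ → ℝ) (m n : ℕ), m ≤ n →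
    ‖∑ i ∈ Finset.range m, a i • x i‖ ≤ K * ‖∑ i ∈ Finset.range n, a i • x i‖

/-- A sequence of signs. -/
def IsSigns (θ : ℕ → ℝ) : Prop := ∀ n, θ n = 1 ∨ θ n = -1

end Defs

namespace SchauderBasis'

variable {X : Type*} [NormedAddCommGroup X] [NormedSpace ℝ X] (b : SchauderBasis' X)

/-- Support of a vector with respect to the basis. -/
def supp (x : X) : Set ℕ := {n | b.coord n x ≠ 0}

/-- A normalised block sequence of the basis. -/
def IsBlockSeq (x : ℕ → X) : Prop :=
  (∀ n, ‖x n‖ = 1) ∧ (∀ n, (b.supp (x n)).Finite) ∧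
  ∀ n, ∀ i ∈ b.supp (x n), ∀ j ∈ b.supp (x (n+1)), i < j

/-- Unconditionality of the basis. -/
def Unconditional : Prop :=
  ∀ θ : ℕ → ℝ, IsSigns θ → SeqEquiv (fun n => θ n • b.e n) b.e

/-- 1-unconditionality (finite-sum form). -/
def OneUnconditional : Prop :=
  ∀ (θ a : ℕ → ℝ), IsSigns θ → ∀ N,
    ‖∑ n ∈ Finset.range N, (θ n * a n) • b.e n‖ ≤ ‖∑ n ∈ Finset.range N, a n • b.e n‖

/-- The shift property: every normalised block sequence is equivalent to its shift. -/
def ShiftProperty : Prop :=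
  ∀ x : ℕ → X, b.IsBlockSeq x → SeqEquiv x (fun n => x (n+1))

/-- The basis is shrinking. -/
def Shrinking : Prop :=
  ∀ f : X →L[ℝ] ℝ, Filter.Tendsto
    (fun n => sSup ((fun y => |f y|) ''
      {y | y ∈ Submodule.span ℝ (Set.range fun i => b.e (n + i)) ∧ ‖y‖ ≤ 1}))
    Filter.atTop (nhds 0)

/-- The basis is boundedly complete. -/
def BoundedlyComplete : Prop :=
  ∀ a : ℕ → ℝ, (∃ M, ∀ N, ‖∑ i ∈ Finset.range N, a i • b.e i‖ ≤ M) →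
    Converges (fun i => a i • b.e i)

end SchauderBasis'


/-!
Let `K` bound the partial-sum projections of the basis. If for some `C` and `M` every normalised
block sequence supported beyond `M` is `C`-equivalent to its shift, then every normalised block
sequence is `C'`-equivalent to its shift: the first `M + 1` terms only contribute through
coefficients, and `|a j| ≤ 2 K ‖∑ a n • x n‖` for any normalised block sequence.

Otherwise, for every `k` there are finite block pieces, as far out as we like, on which
`∑ a n • x n` and `∑ a n • x (n + 1)` differ in norm by a factor greater than `2 ^ k`. Placing
such pieces one after another gives a single normalised block sequence `z`. Rescaling the `k`-th
piece so that the larger of its two sums has norm one, one of the series `∑ c n • z n`,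
`∑ c n • z (n + 1)` has windows of norm at most `2⁻¹ ^ k` and converges (block sequences are
basic), while the other has infinitely many windows of norm one and diverges; this contradicts
the shift property of `z`.
-/

open Finset

section Windows

variable {α : Type*} {L : ℕ → ℕ}

/-- The `k`-th window is `[windowStart L k, windowStart L k + L k)`. -/
def windowStart (L : ℕ → ℕ) (k : ℕ) : ℕ := ∑ i ∈ range k, L i

def windowIndex (L : ℕ → ℕ) (n : ℕ) : ℕ := Nat.findGreatest (fun k => windowStart L k ≤ n) n

/-- The concatenation of the finite sequences `f k 0, …, f k (L k - 1)`. -/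
def glue (L : ℕ → ℕ) (f : ℕ → ℕ → α) (n : ℕ) : α :=
  f (windowIndex L n) (n - windowStart L (windowIndex L n))

lemma windowStart_succ (L : ℕ → ℕ) (k : ℕ) : windowStart L (k + 1) = windowStart L k + L k :=
  sum_range_succ L k

lemma windowStart_strictMono (hL : ∀ k, 0 < L k) : StrictMono (windowStart L) :=
  strictMono_nat_of_lt_succ fun k => by rw [windowStart_succ]; have := hL k; omega

lemma windowIndex_windowStart_add (hL : ∀ k, 0 < L k) {k j : ℕ} (hj : j < L k) :
    windowIndex L (windowStart L k + j) = k := by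
  rw [windowIndex, Nat.findGreatest_eq_iff]
  refine ⟨(windowStart_strictMono hL).le_apply.trans (Nat.le_add_right _ _),
    fun _ => Nat.le_add_right _ _, fun k' hk' _ => ?_⟩
  have := (windowStart_strictMono hL).monotone (Nat.succ_le_of_lt hk')
  rw [windowStart_succ] at this
  omega

lemma exists_eq_windowStart_add (hL : ∀ k, 0 < L k) (n : ℕ) :
    ∃ k j, j < L k ∧ n = windowStart L k + j := by
  set k := windowIndex L n
  have hle : windowStart L k ≤ n :=
    Nat.findGreatest_spec (P := fun k => windowStart L k ≤ n) (Nat.zero_le n)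
      (by simp [windowStart])
  have hlt : n < windowStart L (k + 1) := by
    by_contra! h
    exact Nat.findGreatest_is_greatest (Nat.lt_succ_self k)
      ((windowStart_strictMono hL).le_apply.trans h) h
  rw [windowStart_succ] at hlt
  exact ⟨k, n - windowStart L k, by omega, by omega⟩

lemma glue_windowStart_add (hL : ∀ k, 0 < L k) (f : ℕ → ℕ → α) {k j : ℕ} (hj : j < L k) :
    glue L f (windowStart L k + j) = f k j := by
  simp only [glue, windowIndex_windowStart_add hL hj, Nat.add_sub_cancel_left]

end Windows

section BasicSequences

variable {X : Type*} [NormedAddCommGroup X] [NormedSpace ℝ X]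

lemma SeqEquiv.symm {x y : ℕ → X} (h : SeqEquiv x y) : SeqEquiv y x := fun a => (h a).symm

lemma CEquiv.of_norm_le {C : ℝ} {x y : ℕ → X} (hC : 0 < C)
    (hxy : ∀ (a : ℕ → ℝ) N, ‖∑ n ∈ range N, a n • x n‖ ≤ C * ‖∑ n ∈ range N, a n • y n‖)
    (hyx : ∀ (a : ℕ → ℝ) N, ‖∑ n ∈ range N, a n • y n‖ ≤ C * ‖∑ n ∈ range N, a n • x n‖) :
    CEquiv C x y :=
  fun a N => ⟨(inv_mul_le_iff₀ hC).2 (hyx a N), hxy a N⟩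

lemma CEquiv.symm {C : ℝ} {x y : ℕ → X} (hC : 0 < C) (h : CEquiv C x y) : CEquiv C y x :=
  .of_norm_le hC (fun a N => (inv_mul_le_iff₀ hC).1 (h a N).1) fun a N => (h a N).2

def windowSum (L : ℕ → ℕ) (c : ℕ → ℝ) (x : ℕ → X) (k : ℕ) : X :=
  ∑ j ∈ range (L k), c (windowStart L k + j) • x (windowStart L k + j)

variable {L : ℕ → ℕ}

lemma windowSum_eq_sub (c : ℕ → ℝ) (x : ℕ → X) (k : ℕ) :
    windowSum L c x k = ∑ n ∈ range (windowStart L (k + 1)), c n • x n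
      - ∑ n ∈ range (windowStart L k), c n • x n := by
  rw [windowStart_succ, sum_range_add, add_sub_cancel_left, windowSum]

lemma windowSum_glue (hL : ∀ k, 0 < L k) (f : ℕ → ℕ → ℝ) (x : ℕ → X) (k : ℕ) :
    windowSum L (glue L f) x k = ∑ j ∈ range (L k), f k j • x (windowStart L k + j) :=
  sum_congr rfl fun j hj => by rw [glue_windowStart_add hL f (mem_range.1 hj)]

lemma windowSum_mul_windowIndex (hL : ∀ k, 0 < L k) (t c : ℕ → ℝ) (x : ℕ → X) (k : ℕ) :
    windowSum L (fun n => t (windowIndex L n) * c n) x k = t k • windowSum L c x k := by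
  rw [windowSum, windowSum, smul_sum]
  refine sum_congr rfl fun j hj => ?_
  rw [windowIndex_windowStart_add hL (mem_range.1 hj), mul_smul]

lemma Converges.tendsto_windowSum (hL : ∀ k, 0 < L k) {c : ℕ → ℝ} {x : ℕ → X}
    (h : Converges fun n => c n • x n) : Tendsto (windowSum L c x) atTop (𝓝 0) := by
  obtain ⟨s, hs⟩ := h
  have hp := hs.comp (windowStart_strictMono hL).tendsto_atTop
  have hdiff := (hp.comp (tendsto_add_atTop_nat 1)).sub hp
  rw [sub_self] at hdiff
  exact hdiff.congr fun k => (windowSum_eq_sub c x k).symm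

/-- `IsBasicSeq` with the constant exposed, so that it can be uniform over a family. -/
def IsBasicSeqWith (K : ℝ) (x : ℕ → X) : Prop :=
  ∀ (a : ℕ → ℝ) (m n : ℕ), m ≤ n →
    ‖∑ i ∈ range m, a i • x i‖ ≤ K * ‖∑ i ∈ range n, a i • x i‖

namespace IsBasicSeqWith

variable {K : ℝ} {x : ℕ → X}

lemma norm_sum_Ico_le (hx : IsBasicSeqWith K x) (a : ℕ → ℝ) {m N n : ℕ} (hmN : m ≤ N)
    (hNn : N ≤ n) :
    ‖∑ i ∈ Ico m N, a i • x i‖ ≤ K * ‖∑ i ∈ Ico m n, a i • x i‖ := by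
  have hcut : ∀ N, m ≤ N →
      ∑ i ∈ range N, (if m ≤ i then a i else 0) • x i = ∑ i ∈ Ico m N, a i • x i := by
    intro N hN
    rw [← sum_range_add_sum_Ico _ hN, sum_eq_zero, zero_add]
    · exact sum_congr rfl fun i hi => by rw [if_pos (mem_Ico.1 hi).1]
    · intro i hi
      rw [if_neg (by simpa using hi), zero_smul]
  rw [← hcut N hmN, ← hcut n (hmN.trans hNn)]
  exact hx _ _ _ hNn

lemma abs_le (hx : IsBasicSeqWith K x) (a : ℕ → ℝ) {j N : ℕ} (hxj : ‖x j‖ = 1) (hj : j < N) :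
    |a j| ≤ 2 * K * ‖∑ i ∈ range N, a i • x i‖ := by
  have h₁ := hx a (j + 1) N hj
  have h₂ := hx a j N hj.le
  calc |a j| = ‖a j • x j‖ := by rw [norm_smul, hxj, mul_one, Real.norm_eq_abs]
    _ = ‖∑ i ∈ range (j + 1), a i • x i - ∑ i ∈ range j, a i • x i‖ := by
      rw [sum_range_succ, add_sub_cancel_left]
    _ ≤ _ := (norm_sub_le _ _).trans (by linarith)

lemma norm_sum_range_le {y : ℕ → X} (hy : IsBasicSeqWith K y) (hy1 : ∀ n, ‖y n‖ = 1)
    (hx : ∀ n, ‖x n‖ ≤ 1) (a : ℕ → ℝ) {m N : ℕ} (hmN : m ≤ N) :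
    ‖∑ i ∈ range m, a i • x i‖ ≤ m * (2 * K * ‖∑ i ∈ range N, a i • y i‖) := by
  refine (norm_sum_le_of_le _ fun i hi => ?_).trans_eq (by rw [sum_const, card_range, nsmul_eq_mul])
  calc ‖a i • x i‖ ≤ |a i| := by
        rw [norm_smul, Real.norm_eq_abs]; exact mul_le_of_le_one_right (abs_nonneg _) (hx i)
    _ ≤ _ := hy.abs_le a (hy1 i) ((mem_range.1 hi).trans_le hmN)

lemma cauchySeq_of_cauchySeq_comp (hx : IsBasicSeqWith K x) (hK : 0 ≤ K) (a : ℕ → ℝ)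
    {p : ℕ → ℕ} (hp : StrictMono p)
    (h : CauchySeq fun k => ∑ i ∈ range (p k), a i • x i) :
    CauchySeq fun n => ∑ i ∈ range n, a i • x i := by
  rw [Metric.cauchySeq_iff'] at h ⊢
  intro ε hε
  obtain ⟨k, hk⟩ := h (ε / (K + 1)) (by positivity)
  refine ⟨p k, fun n hn => ?_⟩
  have hnp : n ≤ p n := hp.le_apply
  rw [dist_eq_norm, ← sum_Ico_eq_sub _ hn]
  calc ‖∑ i ∈ Ico (p k) n, a i • x i‖ ≤ K * ‖∑ i ∈ Ico (p k) (p n), a i • x i‖ :=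
        hx.norm_sum_Ico_le a hn hnp
    _ ≤ K * (ε / (K + 1)) := by
      rw [sum_Ico_eq_sub _ (hn.trans hnp), ← dist_eq_norm]
      exact mul_le_mul_of_nonneg_left (hk n (hp.le_apply.trans hn)).le hK
    _ < ε := by rw [mul_div_assoc', div_lt_iff₀ (by positivity)]; nlinarith

lemma converges_of_norm_windowSum_le [CompleteSpace X] (hx : IsBasicSeqWith K x) (hK : 0 ≤ K)
    (hL : ∀ k, 0 < L k) (c : ℕ → ℝ) (h : ∀ k, ‖windowSum L c x k‖ ≤ 2⁻¹ ^ k) :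
    Converges fun n => c n • x n := by
  refine cauchySeq_tendsto_of_complete
    (hx.cauchySeq_of_cauchySeq_comp hK c (windowStart_strictMono hL) ?_)
  refine cauchySeq_of_le_geometric 2⁻¹ 1 (by norm_num) fun k => ?_
  rw [dist_comm, dist_eq_norm, ← windowSum_eq_sub, one_mul]
  exact h k

end IsBasicSeqWith

theorem not_seqEquiv_of_windowSum [CompleteSpace X] {K : ℝ} {y z : ℕ → X}
    (hz : IsBasicSeqWith K z) (hK : 0 ≤ K) (hL : ∀ k, 0 < L k) (c : ℕ → ℝ)
    (hbad : {k | 2 ^ k * ‖windowSum L c z k‖ < ‖windowSum L c y k‖}.Infinite) :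
    ¬SeqEquiv y z := by
  classical
  set S := {k | 2 ^ k * ‖windowSum L c z k‖ < ‖windowSum L c y k‖}
  set t : ℕ → ℝ := fun k => if k ∈ S then ‖windowSum L c y k‖⁻¹ else 0
  set c' : ℕ → ℝ := fun n => t (windowIndex L n) * c n
  have hconv : Converges fun n => c' n • z n := by
    refine hz.converges_of_norm_windowSum_le hK hL c' fun k => ?_
    rw [windowSum_mul_windowIndex hL, norm_smul]
    by_cases hk : k ∈ S
    · have hpos : 0 < ‖windowSum L c y k‖ := (by positivity : (0 : ℝ) ≤ _).trans_lt hk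
      simp only [t, if_pos hk, norm_inv, norm_norm]
      rw [inv_mul_le_iff₀ hpos, inv_pow, ← div_eq_mul_inv, le_div_iff₀ (by positivity),
        mul_comm]
      exact hk.le
    · simp [t, hk]
  have hdiv : ¬Converges fun n => c' n • y n := fun h => by
    have hsmall := (tendsto_zero_iff_norm_tendsto_zero.1
      (h.tendsto_windowSum hL)).eventually_lt_const one_pos
    have hone : ∃ᶠ k in atTop, ‖windowSum L c' y k‖ = 1 := by
      refine Nat.frequently_atTop_iff_infinite.2 (hbad.mono fun k hk => ?_)
      have hpos : 0 < ‖windowSum L c y k‖ := (by positivity : (0 : ℝ) ≤ _).trans_lt hk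
      show ‖windowSum L c' y k‖ = 1
      rw [windowSum_mul_windowIndex hL, norm_smul]
      simp only [t, if_pos hk, norm_inv, norm_norm]
      exact inv_mul_cancel₀ hpos.ne'
    obtain ⟨k, hk1, hk2⟩ := (hone.and_eventually hsmall).exists
    exact hk2.ne hk1
  exact fun h => hdiv ((h c').2 hconv)

theorem norm_sum_range_le_of_tail {K C : ℝ} {m : ℕ} {x y : ℕ → X} (hx : ∀ n, ‖x n‖ ≤ 1)
    (hy : IsBasicSeqWith K y) (hy1 : ∀ n, ‖y n‖ = 1) (hK : 0 ≤ K) (hC : 0 ≤ C)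
    (htail : ∀ (a : ℕ → ℝ) N,
      ‖∑ j ∈ range N, a j • x (m + j)‖ ≤ C * ‖∑ j ∈ range N, a j • y (m + j)‖)
    (a : ℕ → ℝ) (N : ℕ) :
    ‖∑ n ∈ range N, a n • x n‖ ≤ (2 * K * m + C * (1 + K)) * ‖∑ n ∈ range N, a n • y n‖ := by
  set T := ‖∑ n ∈ range N, a n • y n‖
  have hT : 0 ≤ T := norm_nonneg _
  rcases le_total N m with hNm | hmN
  · have hNm' : (N : ℝ) ≤ m := by exact_mod_cast hNm
    have := hy.norm_sum_range_le hy1 hx a (le_refl N)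
    nlinarith [mul_nonneg hK hT, mul_nonneg hC (mul_nonneg (add_nonneg zero_le_one hK) hT)]
  · have hhead := hy.norm_sum_range_le hy1 hx a hmN
    have htail_y : ‖∑ j ∈ range (N - m), a (m + j) • y (m + j)‖ ≤ (1 + K) * T := by
      rw [← sum_Ico_eq_sum_range (fun n => a n • y n), sum_Ico_eq_sub _ hmN]
      linarith [norm_sub_le (∑ n ∈ range N, a n • y n) (∑ n ∈ range m, a n • y n), hy a m N hmN]
    calc ‖∑ n ∈ range N, a n • x n‖
        = ‖∑ n ∈ range m, a n • x n + ∑ j ∈ range (N - m), a (m + j) • x (m + j)‖ := by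
          rw [← sum_Ico_eq_sum_range (fun n => a n • x n), sum_range_add_sum_Ico _ hmN]
      _ ≤ m * (2 * K * T) + C * ((1 + K) * T) :=
          (norm_add_le _ _).trans (add_le_add hhead
            ((htail _ _).trans (mul_le_mul_of_nonneg_left htail_y hC)))
      _ = _ := by ring

end BasicSequences

namespace SchauderBasis'

variable {X : Type*} [NormedAddCommGroup X] [NormedSpace ℝ X] (b : SchauderBasis' X)

def proj (N : ℕ) : X →L[ℝ] X :=
  ∑ n ∈ range N, (b.coord n).smulRight (b.e n)

lemma proj_apply (N : ℕ) (x : X) : b.proj N x = ∑ n ∈ range N, b.coord n x • b.e n := by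
  simp [proj]

lemma exists_norm_proj_le [CompleteSpace X] :
    ∃ K, 0 ≤ K ∧ ∀ (N : ℕ) (x : X), ‖b.proj N x‖ ≤ K * ‖x‖ := by
  obtain ⟨K, hK⟩ := banach_steinhaus (g := b.proj) fun x => by
    obtain ⟨C, hC⟩ := (b.expansion x).norm.bddAbove_range
    exact ⟨C, fun N => by simpa [proj_apply] using hC ⟨N, rfl⟩⟩
  exact ⟨K, (norm_nonneg _).trans (hK 0), fun N x =>
    ((b.proj N).le_opNorm x).trans (mul_le_mul_of_nonneg_right (hK N) (norm_nonneg x))⟩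

lemma coord_eq_zero {v : X} {n : ℕ} (h : n ∉ b.supp v) : b.coord n v = 0 := not_not.1 h

lemma proj_eq_zero_of_le {v : X} {M : ℕ} (h : ∀ i ∈ b.supp v, M ≤ i) : b.proj M v = 0 := by
  rw [proj_apply]
  refine sum_eq_zero fun n hn => ?_
  rw [b.coord_eq_zero fun hs => (mem_range.1 hn).not_ge (h n hs), zero_smul]

lemma proj_eq_self_of_lt {v : X} {M : ℕ} (h : ∀ i ∈ b.supp v, i < M) : b.proj M v = v := by
  refine tendsto_nhds_unique (tendsto_const_nhds.congr' ?_) (b.expansion v)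
  filter_upwards [eventually_ge_atTop M] with N hN
  rw [proj_apply, ← sum_range_add_sum_Ico _ hN, left_eq_add]
  refine sum_eq_zero fun n hn => ?_
  rw [b.coord_eq_zero fun hs => (mem_Ico.1 hn).1.not_gt (h n hs), zero_smul]

lemma supp_nonempty {v : X} (hv : v ≠ 0) : (b.supp v).Nonempty := by
  by_contra h
  refine hv ?_
  rw [← b.proj_eq_self_of_lt (M := 0) fun i hi => (h ⟨i, hi⟩).elim, proj_apply, sum_range_zero]

def ShiftUniformBeyond (C : ℝ) (M : ℕ) : Prop :=
  ∀ x : ℕ → X, b.IsBlockSeq x → (∀ i ∈ b.supp (x 0), M < i) → CEquiv C x (fun n => x (n + 1))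

variable {b}

namespace IsBlockSeq

variable {x : ℕ → X}

lemma supp_nonempty (hx : b.IsBlockSeq x) (n : ℕ) : (b.supp (x n)).Nonempty :=
  b.supp_nonempty fun h => by simpa [h] using hx.1 n

lemma lt_of_mem_supp (hx : b.IsBlockSeq x) {m n i j : ℕ} (hmn : m < n) (hi : i ∈ b.supp (x m))
    (hj : j ∈ b.supp (x n)) : i < j := by
  induction n, hmn using Nat.le_induction generalizing j with
  | base => exact hx.2.2 m i hi j hj
  | succ n _ ih =>
    obtain ⟨l, hl⟩ := hx.supp_nonempty n
    exact (ih hl).trans (hx.2.2 n l hl j hj)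

lemma le_of_mem_supp (hx : b.IsBlockSeq x) {n j : ℕ} (hj : j ∈ b.supp (x n)) : n ≤ j := by
  induction n generalizing j with
  | zero => exact Nat.zero_le j
  | succ n ih =>
    obtain ⟨l, hl⟩ := hx.supp_nonempty n
    exact (ih hl).trans_lt (hx.2.2 n l hl j hj)

lemma tail (hx : b.IsBlockSeq x) (m : ℕ) : b.IsBlockSeq fun n => x (m + n) :=
  ⟨fun _ => hx.1 _, fun _ => hx.2.1 _, fun n => hx.2.2 (m + n)⟩

lemma shift (hx : b.IsBlockSeq x) : b.IsBlockSeq fun n => x (n + 1) :=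
  ⟨fun _ => hx.1 _, fun _ => hx.2.1 _, fun n => hx.2.2 (n + 1)⟩

/-- `∑_{i < m} a i • x i` is the image of `∑_{i < n} a i • x i` under the projection onto
the coordinates below the support of `x m`. -/
lemma isBasicSeqWith (hx : b.IsBlockSeq x) {K : ℝ}
    (hK : ∀ (N : ℕ) (v : X), ‖b.proj N v‖ ≤ K * ‖v‖) : IsBasicSeqWith K x := by
  intro a m n hmn
  have hM := Nat.sInf_mem (hx.supp_nonempty m)
  have hproj : b.proj (sInf (b.supp (x m))) (∑ i ∈ range n, a i • x i)
      = ∑ i ∈ range m, a i • x i := by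
    rw [map_sum, ← sum_range_add_sum_Ico _ hmn, sum_eq_zero (s := Ico m n), add_zero]
    · refine sum_congr rfl fun i hi => ?_
      rw [map_smul, b.proj_eq_self_of_lt fun j hj => hx.lt_of_mem_supp (mem_range.1 hi) hj hM]
    · intro i hi
      rw [map_smul, b.proj_eq_zero_of_le fun j hj => ?_, smul_zero]
      rcases (mem_Ico.1 hi).1.eq_or_lt with rfl | hlt
      · exact Nat.sInf_le hj
      · exact (hx.lt_of_mem_supp hlt hM hj).le
  rw [← hproj]
  exact hK _ _

end IsBlockSeq

lemma isBlockSeq_glue {L : ℕ → ℕ} (hL : ∀ k, 0 < L k) {xs : ℕ → ℕ → X}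
    (hxs : ∀ k, b.IsBlockSeq (xs k))
    (hsep : ∀ k, ∀ j < L k, ∀ i ∈ b.supp (xs k j), ∀ i' ∈ b.supp (xs (k + 1) 0), i < i') :
    b.IsBlockSeq (glue L xs) := by
  refine ⟨fun n => (hxs _).1 _, fun n => (hxs _).2.1 _, fun n => ?_⟩
  obtain ⟨k, j, hj, rfl⟩ := exists_eq_windowStart_add hL n
  rw [glue_windowStart_add hL xs hj]
  rcases (Nat.succ_le_of_lt hj).lt_or_eq with hj' | hj'
  · rw [add_assoc, glue_windowStart_add hL xs hj']
    exact (hxs k).2.2 j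
  · rw [show windowStart L k + j + 1 = windowStart L (k + 1) + 0 by rw [windowStart_succ]; omega,
      glue_windowStart_add hL xs (hL _)]
    exact hsep k j hj

lemma exists_glue_of_forall_far (Q : ℕ → X → X → Prop)
    (h : ∀ k M, ∃ (x : ℕ → X) (a : ℕ → ℝ) (N : ℕ), b.IsBlockSeq x ∧
      (∀ i ∈ b.supp (x 0), M < i) ∧
      Q k (∑ n ∈ range N, a n • x n) (∑ n ∈ range N, a n • x (n + 1))) :
    ∃ (z : ℕ → X) (L : ℕ → ℕ) (c : ℕ → ℝ), (∀ k, 0 < L k) ∧ b.IsBlockSeq z ∧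
      ∀ k, Q k (windowSum L c z k) (windowSum L c (fun n => z (n + 1)) k) := by
  choose x a N hx hfar hQ using h
  have hbdd : ∀ k M, ∃ B, ∀ j ≤ N k M, ∀ i ∈ b.supp (x k M j), i ≤ B := fun k M => by
    obtain ⟨B, hB⟩ := ((Set.finite_le_nat (N k M)).biUnion fun j _ => (hx k M).2.1 j).bddAbove
    exact ⟨B, fun j hj i hi => hB (Set.mem_biUnion hj hi)⟩
  choose B hB using hbdd
  -- the `k`-th piece is chosen beyond all supports of the previous one
  let M : ℕ → ℕ := fun k => Nat.rec 0 (fun k Mk => B k Mk) k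
  let L : ℕ → ℕ := fun k => N k (M k) + 1
  have hL : ∀ k, 0 < L k := fun k => Nat.succ_pos _
  -- the pieces are padded by one term so that the shifted sums stay inside their window
  let as : ℕ → ℕ → ℝ := fun k j => if j < N k (M k) then a k (M k) j else 0
  let xs : ℕ → ℕ → X := fun k => x k (M k)
  refine ⟨glue L xs, L, glue L as, hL, isBlockSeq_glue hL (fun k => hx k _) ?_, fun k => ?_⟩
  · intro k j hj i hi i' hi'
    exact (hB k (M k) j (Nat.lt_succ_iff.1 hj) i hi).trans_lt (hfar (k + 1) (M (k + 1)) i' hi')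
  · have hpad : ∀ w : ℕ → X, windowSum L (glue L as) w k
        = ∑ j ∈ range (N k (M k)), a k (M k) j • w (windowStart L k + j) := fun w => by
      rw [windowSum_glue hL, sum_range_succ]
      simp only [as, lt_irrefl, if_false, zero_smul, add_zero]
      exact sum_congr rfl fun j hj => by rw [if_pos (mem_range.1 hj)]
    rw [hpad, hpad]
    convert hQ k (M k) using 1 <;> refine sum_congr rfl fun j hj => ?_
    · rw [glue_windowStart_add hL xs (Nat.lt_succ_of_lt (mem_range.1 hj))]
    · rw [add_assoc, glue_windowStart_add hL xs (Nat.succ_lt_succ (mem_range.1 hj))]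

lemma exists_shiftUniformBeyond [CompleteSpace X] {K : ℝ} (hK0 : 0 ≤ K)
    (hK : ∀ (N : ℕ) (v : X), ‖b.proj N v‖ ≤ K * ‖v‖) (hshift : b.ShiftProperty) :
    ∃ C M, 1 ≤ C ∧ b.ShiftUniformBeyond C M := by
  by_contra! hnot
  have hbad : ∀ (k : ℕ) M, ∃ (x : ℕ → X) (a : ℕ → ℝ) (N : ℕ), b.IsBlockSeq x ∧
      (∀ i ∈ b.supp (x 0), M < i) ∧
      (2 ^ k * ‖∑ n ∈ range N, a n • x (n + 1)‖ < ‖∑ n ∈ range N, a n • x n‖ ∨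
        2 ^ k * ‖∑ n ∈ range N, a n • x n‖ < ‖∑ n ∈ range N, a n • x (n + 1)‖) := by
    intro k M
    by_contra! h
    exact hnot (2 ^ k) M (one_le_pow₀ one_le_two) fun x hx hfar =>
      .of_norm_le (by positivity) (fun a N => (h x a N hx hfar).1) fun a N => (h x a N hx hfar).2
  obtain ⟨z, L, c, hL, hz, hQ⟩ := b.exists_glue_of_forall_far
    (fun k u v => 2 ^ k * ‖v‖ < ‖u‖ ∨ 2 ^ k * ‖u‖ < ‖v‖) hbad
  have hunion : {k | 2 ^ k * ‖windowSum L c (fun n => z (n + 1)) k‖ < ‖windowSum L c z k‖} ∪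
      {k | 2 ^ k * ‖windowSum L c z k‖ < ‖windowSum L c (fun n => z (n + 1)) k‖} = Set.univ :=
    Set.eq_univ_of_forall hQ
  rcases Set.infinite_union.1 (hunion ▸ Set.infinite_univ) with h | h
  · exact not_seqEquiv_of_windowSum (hz.shift.isBasicSeqWith hK) hK0 hL c h (hshift z hz)
  · exact not_seqEquiv_of_windowSum (hz.isBasicSeqWith hK) hK0 hL c h (hshift z hz).symm

lemma exists_cequiv_of_shiftUniformBeyond {K C : ℝ} {M : ℕ} (hK0 : 0 ≤ K)
    (hK : ∀ (N : ℕ) (v : X), ‖b.proj N v‖ ≤ K * ‖v‖) (hC : 1 ≤ C)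
    (h : b.ShiftUniformBeyond C M) :
    ∃ C', 1 ≤ C' ∧ ∀ x : ℕ → X, b.IsBlockSeq x → CEquiv C' x (fun n => x (n + 1)) := by
  have hC' : 1 ≤ 2 * K * ((M + 1 : ℕ) : ℝ) + C * (1 + K) := by
    have : 0 ≤ 2 * K * ((M + 1 : ℕ) : ℝ) := by positivity
    nlinarith
  refine ⟨_, hC', fun x hx => ?_⟩
  have htail := h _ (hx.tail (M + 1)) fun i hi => hx.le_of_mem_supp hi
  have hx' := hx.shift
  exact .of_norm_le (by linarith)
    (norm_sum_range_le_of_tail (fun n => (hx.1 n).le) (hx'.isBasicSeqWith hK) hx'.1 hK0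
      (by linarith) fun a N => (htail a N).2)
    (norm_sum_range_le_of_tail (fun n => (hx'.1 n).le) (hx.isBasicSeqWith hK) hx.1 hK0
      (by linarith) fun a N => ((htail.symm (by linarith)) a N).2)

end SchauderBasis'

theorem shift_property_uniform_general
    {X : Type*} [NormedAddCommGroup X] [NormedSpace ℝ X] [CompleteSpace X]
    (b : SchauderBasis' X) (hshift : b.ShiftProperty) :
    ∃ C : ℝ, 1 ≤ C ∧ ∀ x : ℕ → X, b.IsBlockSeq x → CEquiv C x (fun n => x (n+1)) := by
  obtain ⟨K, hK0, hK⟩ := b.exists_norm_proj_le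
  obtain ⟨C, M, hC, hCM⟩ := b.exists_shiftUniformBeyond hK0 hK hshift
  exact b.exists_cequiv_of_shiftUniformBeyond hK0 hK hC hCM

theorem shift_property_uniform
    {X : Type*} [NormedAddCommGroup X] [NormedSpace ℝ X] [CompleteSpace X]
    (b : SchauderBasis' X) (hu : b.Unconditional) (hshift : b.ShiftProperty) :
    ∃ C : ℝ, 1 ≤ C ∧ ∀ x : ℕ → X, b.IsBlockSeq x → CEquiv C x (fun n => x (n+1)) :=
  shift_property_uniform_general b hshift
end
end

section
/- Let (u_i) be a normalised basic sequence in a Banach space such that for every choice of signs ε_i ∈ {−1,1}, the sequence (u_{2i−1}) is equivalent to (ε_{2i} u_{2i}). Then (u_{2i−1}) is an unconditional basic sequence. -/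
open Filter Topology

noncomputable section

structure NormedSchauderBasis (X : Type*) [NormedAddCommGroup X] [NormedSpace ℝ X] where
  e : ℕ → X
  coord : ℕ → X →L[ℝ] ℝ
  biorth : ∀ n m, coord n (e m) = if n = m then 1 else 0
  expansion : ∀ x : X,
    Filter.Tendsto (fun N => ∑ n ∈ Finset.range N, coord n x • e n) Filter.atTop (nhds x)
  normalised : ∀ n, ‖e n‖ = 1

namespace NormedSchauderBasis

variable {X : Type*} [NormedAddCommGroup X] [NormedSpace ℝ X] (b : NormedSchauderBasis X)

/-- Support of a vector with respect to the basis. -/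
def supp (x : X) : Set ℕ := {n | b.coord n x ≠ 0}

/-- A normalised block sequence of the basis. -/
def IsBlockSeq (x : ℕ → X) : Prop :=
  (∀ n, ‖x n‖ = 1) ∧ (∀ n, (b.supp (x n)).Finite) ∧
  ∀ n, ∀ i ∈ b.supp (x n), ∀ j ∈ b.supp (x (n+1)), i < j

/-- Unconditionality of the basis. -/
def Unconditional : Prop :=
  ∀ θ : ℕ → ℝ, IsSigns θ → SeqEquiv (fun n => θ n • b.e n) b.e

/-- 1-unconditionality (finite-sum form). -/
def OneUnconditional : Prop :=
  ∀ (θ a : ℕ → ℝ), IsSigns θ → ∀ N,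
    ‖∑ n ∈ Finset.range N, (θ n * a n) • b.e n‖ ≤ ‖∑ n ∈ Finset.range N, a n • b.e n‖

/-- The shift property: every normalised block sequence is equivalent to its shift. -/
def ShiftProperty : Prop :=
  ∀ x : ℕ → X, b.IsBlockSeq x → SeqEquiv x (fun n => x (n+1))

/-- The basis is shrinking. -/
def Shrinking : Prop :=
  ∀ f : X →L[ℝ] ℝ, Filter.Tendsto
    (fun n => sSup ((fun y => |f y|) ''
      {y | y ∈ Submodule.span ℝ (Set.range fun i => b.e (n + i)) ∧ ‖y‖ ≤ 1}))
    Filter.atTop (nhds 0)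

/-- The basis is boundedly complete. -/
def BoundedlyComplete : Prop :=
  ∀ a : ℕ → ℝ, (∃ M, ∀ N, ‖∑ i ∈ Finset.range N, a i • b.e i‖ ≤ M) →
    Converges (fun i => a i • b.e i)

end NormedSchauderBasis

/-! Since εᵢ² = 1, `∑ aᵢ u_{2i+1}` and `∑ (εᵢaᵢ)(εᵢ u_{2i+1})` are the same series. Equivalence of
`(u_{2i})` with `(u_{2i+1})` (all signs `+1`) makes it converge whenever `∑ aᵢ u_{2i}` does, and
equivalence with `(εᵢ u_{2i+1})` then gives convergence of `∑ εᵢaᵢ u_{2i}`. -/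

section Signs

variable {X Y : Type*} [NormedAddCommGroup X] [NormedSpace ℝ X]
  [NormedAddCommGroup Y] [NormedSpace ℝ Y]

lemma isSigns_one : IsSigns (fun _ => (1 : ℝ)) := fun _ => Or.inl rfl

lemma IsSigns.mul_self {ε : ℕ → ℝ} (hε : IsSigns ε) (n : ℕ) : ε n * ε n = 1 := by
  rcases hε n with h | h <;> simp [h]

lemma IsSigns.mul_smul_smul {ε : ℕ → ℝ} (hε : IsSigns ε) (a : ℕ → ℝ) (y : ℕ → Y) :
    (fun i => (ε i * a i) • ε i • y i) = fun i => a i • y i := by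
  funext i
  rw [smul_smul, mul_right_comm, hε.mul_self, one_mul]

theorem converges_sign_mul_smul_of_seqEquiv_signs_smul {x : ℕ → X} {y : ℕ → Y}
    (h : ∀ ε : ℕ → ℝ, IsSigns ε → SeqEquiv x (fun i => ε i • y i)) {a : ℕ → ℝ}
    (ha : Converges (fun i => a i • x i)) {ε : ℕ → ℝ} (hε : IsSigns ε) :
    Converges (fun i => (ε i * a i) • x i) := by
  have hy : Converges (fun i => a i • y i) := by
    simpa only [one_smul] using (h _ isSigns_one a).mp ha
  refine (h ε hε _).mpr ?_
  rwa [hε.mul_smul_smul]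

end Signs

theorem odd_subsequence_unconditional_general
    {X : Type*} [NormedAddCommGroup X] [NormedSpace ℝ X]
    (u : ℕ → X)
    (h : ∀ ε : ℕ → ℝ, IsSigns ε →
      SeqEquiv (fun i => u (2*i)) (fun i => ε i • u (2*i+1))) :
    ∀ a : ℕ → ℝ, Converges (fun i => a i • u (2*i)) →
      ∀ ε : ℕ → ℝ, IsSigns ε → Converges (fun i => (ε i * a i) • u (2*i)) :=
  fun _ ha _ hε => converges_sign_mul_smul_of_seqEquiv_signs_smul h ha hε

theorem odd_subsequence_unconditional
    {X : Type*} [NormedAddCommGroup X] [NormedSpace ℝ X] [CompleteSpace X]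
    (u : ℕ → X) (hbasic : IsBasicSeq u) (hnorm : ∀ n, ‖u n‖ = 1)
    (h : ∀ ε : ℕ → ℝ, IsSigns ε →
      SeqEquiv (fun i => u (2*i)) (fun i => ε i • u (2*i+1))) :
    ∀ a : ℕ → ℝ, Converges (fun i => a i • u (2*i)) →
      ∀ ε : ℕ → ℝ, IsSigns ε → Converges (fun i => (ε i * a i) • u (2*i)) :=
  odd_subsequence_unconditional_general u h
end
end
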